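/- arXiv:2510.16279 — 2 statements merged into one kernel-verified Lean document; each statement's English description precedes it below -/
import Mathlib

section
/- If (a,a) ≠ 0, the Eichler transvection factors as a product of two reflections: t(e,a) = s_a ∘ s_{a + ½(a,a)e}, where s_v(x) = x − 2((x,v)/(v,v))v; consequently t(e,a) has determinant 1. -/
/-- The Eichler transvection `t(e,a)(v) = v − (a,v)e + (e,v)a − ½(a,a)(e,v)e`. -/
def eichler {V : Type*} [AddCommGroup V] [Module ℚ V]
    (B : V →ₗ[ℚ] V →ₗ[ℚ] ℚ) (e a v : V) : V :=
  v - (B a v) • e + (B e v) • a - (B a a / 2 * B e v) • e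

/-- The reflection `s_u(x) = x − 2((x,u)/(u,u))·u` along a vector `u`. -/
def reflAlong {V : Type*} [AddCommGroup V] [Module ℚ V]
    (B : V →ₗ[ℚ] V →ₗ[ℚ] ℚ) (u x : V) : V :=
  x - (2 * B x u / B u u) • u

/-- The Eichler transvection as a bundled linear map. -/
noncomputable def eichlerMap {V : Type*} [AddCommGroup V] [Module ℚ V]
    (B : V →ₗ[ℚ] V →ₗ[ℚ] ℚ) (e a : V) : V →ₗ[ℚ] V :=
  LinearMap.id - (B a).smulRight e + (B e).smulRight a
    - (B a a / 2) • (B e).smulRight e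

/-!
Since `e` is isotropic and orthogonal to `a`, the vector `w = a + ½(a,a)e` has `(w,w) = (a,a)`,
so `s_w` is defined, and `s_a ∘ s_w = t(e,a)` is a direct computation. Each reflection `s_u` is
the transvection `x ↦ x + f(x) u` with `f(u) = -2`, whose determinant is `1 + f(u) = -1`.
-/

section

variable {V : Type*} [AddCommGroup V] [Module ℚ V] (B : V →ₗ[ℚ] V →ₗ[ℚ] ℚ)

theorem eichlerMap_apply (e a v : V) : eichlerMap B e a v = eichler B e a v := by
  simp [eichlerMap, eichler, LinearMap.smulRight, smul_smul]

noncomputable def reflAlongMap (u : V) : V →ₗ[ℚ] V :=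
  LinearMap.transvection (-(2 / B u u) • B.flip u) u

theorem reflAlongMap_apply (u x : V) : reflAlongMap B u x = reflAlong B u x := by
  simp only [reflAlongMap, reflAlong, LinearMap.transvection.apply, LinearMap.smul_apply,
    LinearMap.flip_apply, smul_eq_mul]
  rw [sub_eq_add_neg, ← neg_smul]
  ring_nf

theorem det_reflAlongMap [FiniteDimensional ℚ V] {u : V} (hu : B u u ≠ 0) :
    LinearMap.det (reflAlongMap B u) = -1 := by
  rw [reflAlongMap, LinearMap.transvection.det, LinearMap.smul_apply, LinearMap.flip_apply,
    smul_eq_mul, neg_mul, div_mul_cancel₀ _ hu]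
  norm_num

theorem apply_add_smul_self_of_isotropic {e a : V} (he : B e e = 0) (hea : B e a = 0)
    (hae : B a e = 0) (c : ℚ) : B (a + c • e) (a + c • e) = B a a := by
  simp [he, hea, hae]

theorem eichler_eq_reflAlong_reflAlong (hsymm : ∀ x y, B x y = B y x) {e a : V}
    (he : B e e = 0) (ha : B e a = 0) (haa : B a a ≠ 0) (v : V) :
    eichler B e a v = reflAlong B a (reflAlong B (a + (B a a / 2) • e) v) := by
  have hae : B a e = 0 := hsymm a e ▸ ha
  simp only [reflAlong]
  rw [apply_add_smul_self_of_isotropic B he ha hae]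
  simp only [eichler, map_add, map_sub, map_smul, LinearMap.add_apply, LinearMap.sub_apply,
    LinearMap.smul_apply, smul_eq_mul, ha, hsymm v a, hsymm v e]
  match_scalars <;> field_simp <;> ring

end

/-- if `(a,a) ≠ 0`, the Eichler transvection factors as a product
of two reflections `t(e,a) = s_a ∘ s_{a + ½(a,a)e}`; consequently it has
determinant `1`. -/
theorem eichler_as_reflections {V : Type*} [AddCommGroup V] [Module ℚ V]
    [FiniteDimensional ℚ V]
    (B : V →ₗ[ℚ] V →ₗ[ℚ] ℚ) (hsymm : ∀ x y, B x y = B y x)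
    (e a : V) (he : B e e = 0) (ha : B e a = 0) (haa : B a a ≠ 0) :
    (∀ v : V, eichler B e a v = reflAlong B a (reflAlong B (a + (B a a / 2) • e) v)) ∧
    (∀ v : V, eichlerMap B e a v = eichler B e a v) ∧
    LinearMap.det (eichlerMap B e a) = 1 := by
  have hfactor := eichler_eq_reflAlong_reflAlong B hsymm he ha haa
  refine ⟨hfactor, eichlerMap_apply B e a, ?_⟩
  set w := a + (B a a / 2) • e
  have hw : B w w ≠ 0 := by
    rwa [apply_add_smul_self_of_isotropic B he ha (hsymm a e ▸ ha)]
  have hcomp : eichlerMap B e a = reflAlongMap B a ∘ₗ reflAlongMap B w := by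
    ext v
    rw [LinearMap.comp_apply, reflAlongMap_apply, reflAlongMap_apply, eichlerMap_apply, hfactor]
  rw [hcomp, LinearMap.det_comp, det_reflAlongMap B haa, det_reflAlongMap B hw]
  norm_num
end

section
/- The geometric lattice is generated by extended Mukai vectors: the ℤ-span of the set {α̃ + δ̃'/2 + λ + (b(λ,λ)/2)β : λ ∈ M ⊕ ℤδ'} together with the three vectors e₁ + δ̃'/2 − β, f, and α̃ (where e₁, f ∈ M) contains β, δ̃'/2, and all of M, and hence equals Λ_g = ℤα̃ ⊕ M ⊕ ℤβ ⊕ ℤ(δ̃'/2), provided M ⊕ ℤδ' is an even lattice, e₁ ∈ M, and f generates together with the rest; conversely all the listed generators lie in Λ_g. -/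
/-- the geometric lattice is generated by extended Mukai vectors:
the ℤ-span of `{α̃ + δ̃'/2 + λ + (b(λ,λ)/2)β : λ ∈ M ⊕ ℤδ'}` together with the
vectors `e₁ + δ̃'/2 − β`, `f`, and `α̃` contains `β`, `δ̃'/2`, and all of `M`,
and equals `Λ_g = ℤα̃ ⊕ M ⊕ ℤβ ⊕ ℤ(δ̃'/2)`; conversely all the listed
generators lie in `Λ_g`. -/
theorem geometric_lattice_generators {V : Type*} [AddCommGroup V] [Module ℚ V]
    (b : V →ₗ[ℚ] V →ₗ[ℚ] ℚ) (hsymm : ∀ x y, b x y = b y x)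
    (n : ℕ) (hn : 0 < n) (δ : V) (hδ : b δ δ = -(2 * n))
    (M : AddSubgroup V) (horth : ∀ x ∈ M, b x δ = 0)
    (e₁ f : V) (he₁ : e₁ ∈ M) (hf : f ∈ M) (hiso : b e₁ e₁ = 0)
    (heven : ∀ x ∈ M ⊔ AddSubgroup.closure {δ}, ∃ k : ℤ, b x x = 2 * k) :
    let αt : ℚ × V × ℚ := (1, (-(1/2 : ℚ)) • δ, -((n : ℚ) / 4))
    let βv : ℚ × V × ℚ := ((0 : ℚ), (0 : V), (1 : ℚ))
    let δt : ℚ × V × ℚ := ((0 : ℚ), δ, (n : ℚ))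
    let half : ℚ × V × ℚ := (1/2 : ℚ) • δt
    let emb : V → ℚ × V × ℚ := fun x => ((0 : ℚ), x, (0 : ℚ))
    let S : Set (ℚ × V × ℚ) :=
      (fun lam => αt + half + ((0 : ℚ), lam, b lam lam / 2)) ''
          ((M ⊔ AddSubgroup.closure {δ} : AddSubgroup V) : Set V)
        ∪ {emb e₁ + half - βv, emb f, αt}
    let Λg : AddSubgroup (ℚ × V × ℚ) :=
      AddSubgroup.closure ({αt, βv, half} ∪ emb '' (M : Set V))
    βv ∈ AddSubgroup.closure S ∧
      half ∈ AddSubgroup.closure S ∧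
      (∀ x ∈ M, emb x ∈ AddSubgroup.closure S) ∧
      AddSubgroup.closure S = Λg := by
  intro αt βv δt half emb S Λg
  set N : AddSubgroup V := M ⊔ AddSubgroup.closure {δ} with hN
  have hSsub : S ⊆ (AddSubgroup.closure S : Set (ℚ × V × ℚ)) := AddSubgroup.subset_closure
  set K := AddSubgroup.closure S with hK
  -- v(0) = αt + half ∈ K
  have h0 : αt + half ∈ K := by
    refine hSsub (Or.inl ⟨0, N.zero_mem, ?_⟩)
    simp
  have hαt : αt ∈ K := hSsub (Or.inr (by simp))
  have hhalf : half ∈ K := by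
    have := K.sub_mem h0 hαt
    simpa using this
  -- emb e₁ ∈ K
  have he : αt + half + emb e₁ ∈ K := by
    refine hSsub (Or.inl ⟨e₁, le_sup_left (α := AddSubgroup V) he₁, ?_⟩)
    simp [hiso, emb]
  have hembe : emb e₁ ∈ K := by
    have := K.sub_mem he h0
    simpa using this
  -- βv ∈ K
  have hg1 : emb e₁ + half - βv ∈ K := hSsub (Or.inr (by simp))
  have hβv : βv ∈ K := by
    have := K.sub_mem (K.add_mem hembe hhalf) hg1
    simpa using this
  -- emb x ∈ K for x ∈ M
  have hembM : ∀ x ∈ M, emb x ∈ K := by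
    intro x hx
    have hxN : x ∈ N := le_sup_left (α := AddSubgroup V) hx
    obtain ⟨k, hk⟩ := heven x hxN
    have hv : αt + half + ((0 : ℚ), x, (k : ℚ)) ∈ K := by
      refine hSsub (Or.inl ⟨x, hxN, ?_⟩)
      have : b x x / 2 = (k : ℚ) := by rw [hk]; ring
      simp [this]
    have h1 : ((0 : ℚ), x, (k : ℚ)) ∈ K := by
      have := K.sub_mem hv h0
      simpa using this
    have h2 := K.sub_mem h1 (K.zsmul_mem hβv k)
    have : ((0 : ℚ), x, (k : ℚ)) - k • βv = emb x := by
      simp [βv, emb, Prod.ext_iff]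
    rwa [this] at h2
  refine ⟨hβv, hhalf, hembM, le_antisymm ?_ ?_⟩
  · rw [AddSubgroup.closure_le]
    rintro v (⟨lam, hlam, rfl⟩ | hv)
    · -- lam = m + t • δ
      obtain ⟨m, hm, z, hz, rfl⟩ := AddSubgroup.mem_sup.mp hlam
      obtain ⟨t, rfl⟩ := AddSubgroup.mem_closure_singleton.mp hz
      obtain ⟨k, hk⟩ := heven (m + t • δ) hlam
      have hαΛ : αt ∈ Λg := AddSubgroup.subset_closure (by simp)
      have hβΛ : βv ∈ Λg := AddSubgroup.subset_closure (by simp)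
      have hhΛ : half ∈ Λg := AddSubgroup.subset_closure (by simp)
      have hmΛ : emb m ∈ Λg := AddSubgroup.subset_closure (Or.inr ⟨m, hm, rfl⟩)
      have key : αt + half + ((0 : ℚ), m + t • δ, b (m + t • δ) (m + t • δ) / 2)
          = αt + (2 * t + 1) • half + emb m + (k - t * n) • βv := by
        have h3 : b (m + t • δ) (m + t • δ) / 2 = (k : ℚ) := by rw [hk]; ring
        rw [h3]
        simp only [Prod.ext_iff, Prod.smul_fst, Prod.smul_snd, Prod.fst_add, Prod.snd_add,
          half, δt, βv, αt, emb, Prod.mk_add_mk, Prod.smul_mk, zsmul_eq_mul, smul_smul, smul_eq_mul]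
        refine ⟨by push_cast; ring, ?_, by push_cast; ring⟩
        push_cast
        module
      show αt + half + ((0 : ℚ), m + t • δ, b (m + t • δ) (m + t • δ) / 2) ∈ (Λg : Set _)
      rw [key]
      exact Λg.add_mem (Λg.add_mem (Λg.add_mem hαΛ (Λg.zsmul_mem hhΛ _)) hmΛ)
        (Λg.zsmul_mem hβΛ _)
    · have hαΛ : αt ∈ Λg := AddSubgroup.subset_closure (by simp)
      have hβΛ : βv ∈ Λg := AddSubgroup.subset_closure (by simp)
      have hhΛ : half ∈ Λg := AddSubgroup.subset_closure (by simp)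
      rcases hv with rfl | rfl | rfl
      · have he₁Λ : emb e₁ ∈ Λg := AddSubgroup.subset_closure (Or.inr ⟨e₁, he₁, rfl⟩)
        exact Λg.sub_mem (Λg.add_mem he₁Λ hhΛ) hβΛ
      · exact AddSubgroup.subset_closure (Or.inr ⟨f, hf, rfl⟩)
      · exact hαΛ
  · rw [AddSubgroup.closure_le]
    rintro v (hv | ⟨x, hx, rfl⟩)
    · rcases hv with rfl | rfl | rfl
      · exact hαt
      · exact hβv
      · exact hhalf
    · exact hembM x hx
end
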